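/- (Generalized Hensel–Rychlík Lemma) Let R be a complete discrete valuation ring with uniformizer π, f ∈ R[X] monic, n ≥ 1, and g_(1),...,g_(n) ∈ R[X] monic of degree ≥ 1 with Res(g_(1),...,g_(n)) ≠ 0. Let t := val_π(Res(g_(1),...,g_(n))) and suppose s ≥ 2t+1 and f(X) ≡ ∏_{k∈[1,n]} g_(k)(X) mod π^s. Then there exist unique monic polynomials ĝ_(1),...,ĝ_(n) ∈ R[X] with ĝ_(k) ≡ g_(k) mod π^{s−t} for all k ∈ [1,n] and f(X) = ∏_{k∈[1,n]} ĝ_(k)(X). -/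

import Mathlib

open Polynomial Finset

/-- The global column position of an index in the block-structured resultant matrix. -/
def resPos {n : ℕ} {m : Fin n → ℕ} (q : (k : Fin n) × Fin (m k)) : ℕ :=
  (∑ j ∈ Finset.univ.filter (fun j => j < q.1), m j) + (q.2 : ℕ)

/-- The matrix `A(g_(1), …, g_(n))` whose block of `deg g_(k)` rows consists of the
successively shifted coefficient rows of `∏_{j ≠ k} g_(j)`. -/
noncomputable def resMatrix {R : Type*} [CommRing R] {n : ℕ} (g : Fin n → Polynomial R) :
    Matrix ((k : Fin n) × Fin ((g k).natDegree)) ((k : Fin n) × Fin ((g k).natDegree)) R :=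
  fun p q =>
    if (p.2 : ℕ) ≤ resPos q then
      (∏ j ∈ Finset.univ.erase p.1, g j).coeff (resPos q - (p.2 : ℕ))
    else 0

/-- The generalized resultant `Res(g_(1), …, g_(n)) = det A(g_(1), …, g_(n))`. -/
noncomputable def genRes {R : Type*} [CommRing R] {n : ℕ} (g : Fin n → Polynomial R) : R :=
  (resMatrix g).det

/-!
Write the sought factors as `g_k + b_k` with `deg b_k < deg g_k`. In the coefficients of the
`b_k`, the linear map `(b_k) ↦ ∑_k b_k ∏_{j ≠ k} g_j` has matrix `A(g)ᵀ`, so through the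
adjugate it is invertible up to `Res = π^t · unit`, and this valuation does not move under
perturbations of size `π^(s-t)` because `s - t > t`. A Newton step therefore turns an error
`π^S` into an error `π^(2(S-t))`, and `2(S-t) ≥ S+1`; completeness gives a limit. Two solutions
differing by `π^a` differ, by the same linear algebra, by `π^(2a-t)`, and `2a - t > a`.
-/

open Matrix

section ResPos

variable {n : ℕ} {m : Fin n → ℕ}

theorem resPos_eq_finSigmaFinEquiv (q : (k : Fin n) × Fin (m k)) :
    resPos q = finSigmaFinEquiv q := by
  rw [finSigmaFinEquiv_apply, resPos]
  congr 1
  refine ((sum_map univ (Fin.castLEEmb q.1.2.le) m).symm.trans ?_).symm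
  congr 1
  ext j
  simp only [mem_map, mem_univ, true_and, mem_filter, Fin.castLEEmb_apply]
  exact ⟨fun ⟨i, hi⟩ => hi ▸ i.2, fun hj => ⟨⟨j, hj⟩, rfl⟩⟩

theorem exists_resPos_eq {e : ℕ} (he : e < ∑ k, m k) :
    ∃ q : (k : Fin n) × Fin (m k), resPos q = e :=
  ⟨finSigmaFinEquiv.symm ⟨e, he⟩, by rw [resPos_eq_finSigmaFinEquiv, Equiv.apply_symm_apply]⟩

end ResPos

section Congruences

variable {R : Type*} [CommRing R]

theorem dvd_sub_iff_mk_eq_mk {x a b : R} :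
    x ∣ a - b ↔ Ideal.Quotient.mk (Ideal.span {x}) a = Ideal.Quotient.mk (Ideal.span {x}) b := by
  rw [Ideal.Quotient.eq, Ideal.mem_span_singleton]

theorem Finset.dvd_prod_sub_prod {ι : Type*} (s : Finset ι) {x : R} {a b : ι → R}
    (h : ∀ i ∈ s, x ∣ a i - b i) : x ∣ ∏ i ∈ s, a i - ∏ i ∈ s, b i := by
  simp only [dvd_sub_iff_mk_eq_mk, map_prod] at h ⊢
  exact prod_congr rfl h

theorem Matrix.dvd_det_sub_det {ι : Type*} [DecidableEq ι] [Fintype ι] {x : R}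
    {A B : Matrix ι ι R} (h : ∀ i j, x ∣ A i j - B i j) : x ∣ A.det - B.det := by
  rw [dvd_sub_iff_mk_eq_mk, RingHom.map_det, RingHom.map_det]
  congr 1
  ext i j
  exact dvd_sub_iff_mk_eq_mk.1 (h i j)

theorem Finset.sq_dvd_prod_add_sub {ι : Type*} [DecidableEq ι] (s : Finset ι) (a b : ι → R)
    {y : R} (hb : ∀ i ∈ s, y ∣ b i) :
    y ^ 2 ∣ ∏ i ∈ s, (a i + b i) - ∏ i ∈ s, a i - ∑ i ∈ s, b i * ∏ j ∈ s.erase i, a j := by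
  induction s using Finset.induction_on with
  | empty => simp
  | insert j s hj ih =>
    have herase : ∀ i ∈ s, ∏ l ∈ (insert j s).erase i, a l = a j * ∏ l ∈ s.erase i, a l :=
      fun i hi => by
        rw [erase_insert_of_ne (ne_of_mem_of_not_mem hi hj).symm,
          prod_insert fun h => hj (mem_of_mem_erase h)]
    have hE := ih fun i hi => hb i (mem_insert_of_mem hi)
    have hD : y ∣ ∏ i ∈ s, (a i + b i) - ∏ i ∈ s, a i :=
      dvd_prod_sub_prod s fun i hi => by simpa using hb i (mem_insert_of_mem hi)
    rw [prod_insert hj, prod_insert hj, sum_insert hj, erase_insert hj, sum_congr rfl fun i hi =>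
      by rw [herase i hi, mul_left_comm], ← mul_sum]
    have key : (a j + b j) * ∏ i ∈ s, (a i + b i) - a j * ∏ i ∈ s, a i -
        (b j * ∏ i ∈ s, a i + a j * ∑ i ∈ s, b i * ∏ l ∈ s.erase i, a l) =
        a j * (∏ i ∈ s, (a i + b i) - ∏ i ∈ s, a i - ∑ i ∈ s, b i * ∏ l ∈ s.erase i, a l) +
          b j * (∏ i ∈ s, (a i + b i) - ∏ i ∈ s, a i) := by ring
    rw [key]
    exact dvd_add (hE.mul_left _) (sq y ▸ mul_dvd_mul (hb j (mem_insert_self j s)) hD)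

theorem Polynomial.Monic.degree_sub_lt_of_C_dvd_sub {f h : R[X]} (hf : f.Monic) (hh : h.Monic)
    {x : R} (hx : ¬IsUnit x) (hd : C x ∣ f - h) : (f - h).degree < h.natDegree := by
  have : Nontrivial R := not_subsingleton_iff_nontrivial.1 fun _ => hx (isUnit_of_subsingleton x)
  have hnlt : ∀ {p q : R[X]}, q.Monic → C x ∣ p - q → ¬p.natDegree < q.natDegree := by
    intro p q hq hpq hlt
    have := (C_dvd_iff_dvd_coeff _ _).1 hpq q.natDegree
    rw [coeff_sub, coeff_eq_zero_of_natDegree_lt hlt, hq.coeff_natDegree, zero_sub] at this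
    exact hx (isUnit_of_dvd_one (dvd_neg.1 this))
  have hdeg : f.natDegree = h.natDegree :=
    le_antisymm (not_lt.1 (hnlt hf (dvd_sub_comm.1 hd))) (not_lt.1 (hnlt hh hd))
  rw [← degree_eq_natDegree hh.ne_zero]
  exact degree_sub_lt_right (by rw [degree_eq_natDegree hf.ne_zero, hdeg,
    degree_eq_natDegree hh.ne_zero]) hh.ne_zero (by rw [hf.leadingCoeff, hh.leadingCoeff])

theorem not_isUnit_pow_of_irreducible {π : R} (hπ : Irreducible π) {N : ℕ} (hN : N ≠ 0) :
    ¬IsUnit (π ^ N) :=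
  fun h => hπ.not_isUnit ((isUnit_pow_iff hN).1 h)

theorem exists_eq_pow_mul_unit [IsDomain R] [IsDiscreteValuationRing R] {π d : R}
    (hπ : Irreducible π) {t : ℕ} (h : π ^ t ∣ d) (h' : ¬π ^ (t + 1) ∣ d) :
    ∃ u : Rˣ, d = π ^ t * u := by
  obtain ⟨e, rfl⟩ := h
  suffices IsUnit e from ⟨this.unit, rfl⟩
  by_contra he
  have : e ∈ Ideal.span {π} := hπ.maximalIdeal_eq ▸ he
  obtain ⟨w, rfl⟩ := Ideal.mem_span_singleton.1 this
  exact h' ⟨w, by ring⟩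

end Congruences

section Adic

variable {R : Type*} [CommRing R] {π : R}

theorem smodEq_span_singleton_pow_iff {a b : R} {M : ℕ} :
    a ≡ b [SMOD (Ideal.span {π} ^ M • ⊤ : Submodule R R)] ↔ π ^ M ∣ a - b := by
  rw [SModEq.sub_mem, smul_eq_mul, Ideal.mul_top, Ideal.span_singleton_pow,
    Ideal.mem_span_singleton]

theorem eq_zero_of_forall_pow_dvd [IsHausdorff (Ideal.span {π}) R] {x : R}
    (h : ∀ M, π ^ M ∣ x) : x = 0 :=
  IsHausdorff.haus ‹_› x fun M => smodEq_span_singleton_pow_iff.2 (by simpa using h M)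

theorem Polynomial.eq_zero_of_forall_C_pow_dvd [IsHausdorff (Ideal.span {π}) R] {p : R[X]}
    (h : ∀ M, C (π ^ M) ∣ p) : p = 0 :=
  ext fun e => eq_zero_of_forall_pow_dvd fun M => (C_dvd_iff_dvd_coeff _ _).1 (h M) e

theorem exists_pow_dvd_sub_limit [IsPrecomplete (Ideal.span {π}) R] {x : ℕ → R} (b : ℕ)
    (hx : ∀ i, π ^ (b + i) ∣ x (i + 1) - x i) : ∃ L, ∀ i, π ^ (b + i) ∣ L - x i := by
  have gap : ∀ i j, i ≤ j → π ^ (b + i) ∣ x j - x i := by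
    intro i j hij
    induction j, hij using Nat.le_induction with
    | base => simp
    | succ j hij ih =>
      rw [← sub_add_sub_cancel]
      exact dvd_add ((pow_dvd_pow π (by omega)).trans (hx j)) ih
  obtain ⟨L, hL⟩ := IsPrecomplete.prec ‹_› fun {i j} hij =>
    smodEq_span_singleton_pow_iff.2 (dvd_sub_comm.1 ((pow_dvd_pow π (by omega)).trans
      (gap i j hij)))
  refine ⟨L, fun i => ?_⟩
  rw [← sub_add_sub_cancel _ (x (b + i))]
  exact dvd_add (dvd_sub_comm.1 (smodEq_span_singleton_pow_iff.1 (hL (b + i))))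
    (gap i (b + i) (by omega))

theorem exists_pow_dvd_sub_limit_pi [IsPrecomplete (Ideal.span {π}) R] {ι : Type*}
    {x : ℕ → ι → R} (b : ℕ) (hx : ∀ i p, π ^ (b + i) ∣ x (i + 1) p - x i p) :
    ∃ L : ι → R, ∀ i p, π ^ (b + i) ∣ L p - x i p := by
  choose L hL using fun p => exists_pow_dvd_sub_limit (x := fun i => x i p) b fun i => hx i p
  exact ⟨L, fun i p => hL p i⟩

end Adic

section Blocks

variable {R : Type*} [CommRing R] {n : ℕ} {m : Fin n → ℕ}

noncomputable def blockPoly (k : Fin n) : ((k : Fin n) × Fin (m k) → R) →ₗ[R] R[X] where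
  toFun c := ∑ i : Fin (m k), C (c ⟨k, i⟩) * X ^ (i : ℕ)
  map_add' c d := by simp only [Pi.add_apply, C_add, add_mul, sum_add_distrib]
  map_smul' a c := by simp only [Pi.smul_apply, smul_eq_mul, C_mul, mul_assoc, ← mul_sum,
    RingHom.id_apply, smul_eq_C_mul]

theorem coeff_blockPoly (k : Fin n) (c : (k : Fin n) × Fin (m k) → R) (e : ℕ) :
    (blockPoly k c).coeff e = if h : e < m k then c ⟨k, ⟨e, h⟩⟩ else 0 := by
  simp only [blockPoly, LinearMap.coe_mk, AddHom.coe_mk, finsetSum_coeff, coeff_C_mul_X_pow]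
  split_ifs with h
  · rw [sum_eq_single ⟨e, h⟩ (fun i _ hi => if_neg fun he => hi (Fin.ext he.symm)) (by simp),
      if_pos rfl]
  · exact sum_eq_zero fun i _ => if_neg fun (he : e = i) => h (he ▸ i.2)

theorem degree_blockPoly_lt (k : Fin n) (c : (k : Fin n) × Fin (m k) → R) :
    (blockPoly k c).degree < m k :=
  degree_lt_iff_coeff_zero _ _ |>.2 fun e he => by rw [coeff_blockPoly, dif_neg (by omega)]

theorem C_dvd_blockPoly {x : R} {c : (k : Fin n) × Fin (m k) → R} (hc : ∀ p, x ∣ c p)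
    (k : Fin n) : C x ∣ blockPoly k c :=
  (C_dvd_iff_dvd_coeff _ _).2 fun e => by
    rw [coeff_blockPoly]
    split_ifs
    exacts [hc _, dvd_zero x]

theorem blockPoly_coeff {w : Fin n → R[X]} {k : Fin n} (hw : (w k).degree < m k) :
    blockPoly k (fun p : (k : Fin n) × Fin (m k) => (w p.1).coeff p.2) = w k := by
  ext e
  rw [coeff_blockPoly]
  split_ifs with h
  · rfl
  · exact (coeff_eq_zero_of_degree_lt (hw.trans_le (by exact_mod_cast not_lt.1 h))).symm

variable (m) in
noncomputable def resCombination (h : Fin n → R[X]) :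
    ((k : Fin n) × Fin (m k) → R) →ₗ[R] R[X] :=
  ∑ k, LinearMap.mulRight R (∏ j ∈ univ.erase k, h j) ∘ₗ blockPoly k

theorem resCombination_apply (h : Fin n → R[X]) (c : (k : Fin n) × Fin (m k) → R) :
    resCombination m h c = ∑ k, blockPoly k c * ∏ j ∈ univ.erase k, h j := by
  simp [resCombination]

/-- `resMatrix` with prescribed block sizes, so that it applies to perturbations of `g`, whose
degrees agree with those of `g` only propositionally; `resMatrix g` is
`blockResMatrix (fun k => (g k).natDegree) g` by `rfl`. -/
noncomputable def blockResMatrix (m : Fin n → ℕ) (h : Fin n → R[X]) :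
    Matrix ((k : Fin n) × Fin (m k)) ((k : Fin n) × Fin (m k)) R :=
  fun p q =>
    if (p.2 : ℕ) ≤ resPos q then (∏ j ∈ univ.erase p.1, h j).coeff (resPos q - (p.2 : ℕ))
    else 0

theorem coeff_resCombination_resPos (h : Fin n → R[X]) (c : (k : Fin n) × Fin (m k) → R)
    (q : (k : Fin n) × Fin (m k)) :
    (resCombination m h c).coeff (resPos q) = ((blockResMatrix m h)ᵀ *ᵥ c) q := by
  rw [mulVec, dotProduct, ← univ_sigma_univ, sum_sigma, resCombination_apply, finsetSum_coeff]
  refine sum_congr rfl fun k _ => ?_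
  simp only [blockPoly, LinearMap.coe_mk, AddHom.coe_mk, sum_mul, finsetSum_coeff]
  refine sum_congr rfl fun i _ => ?_
  rw [mul_right_comm, coeff_mul_X_pow']
  simp only [coeff_C_mul, transpose_apply, blockResMatrix]
  split_ifs <;> ring

theorem degree_resCombination_lt {h : Fin n → R[X]} (hh : ∀ k, (h k).natDegree ≤ m k)
    (c : (k : Fin n) × Fin (m k) → R) : (resCombination m h c).degree < (∑ k, m k : ℕ) := by
  rw [resCombination_apply]
  refine (degree_sum_le _ _).trans_lt ((Finset.sup_lt_iff (WithBot.bot_lt_coe _)).2 fun k _ => ?_)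
  have hprod : (∏ j ∈ univ.erase k, h j).degree ≤ (∑ j ∈ univ.erase k, m j : ℕ) :=
    degree_le_of_natDegree_le ((natDegree_prod_le _ _).trans (sum_le_sum fun j _ => hh j))
  calc (blockPoly k c * ∏ j ∈ univ.erase k, h j).degree
      ≤ (blockPoly k c).degree + (∏ j ∈ univ.erase k, h j).degree := degree_mul_le _ _
    _ ≤ (blockPoly k c).degree + (∑ j ∈ univ.erase k, m j : ℕ) := by gcongr
    _ < (m k : WithBot ℕ) + (∑ j ∈ univ.erase k, m j : ℕ) :=
      WithBot.add_lt_add_right (WithBot.coe_ne_bot) (degree_blockPoly_lt k c)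
    _ = (∑ k, m k : ℕ) := by rw [← Nat.cast_add, add_sum_erase _ _ (mem_univ k)]

theorem resCombination_adjugate_mulVec {h : Fin n → R[X]} (hh : ∀ k, (h k).natDegree ≤ m k)
    {r : R[X]} (hr : r.degree < (∑ k, m k : ℕ)) :
    resCombination m h ((blockResMatrix m h)ᵀ.adjugate *ᵥ fun q => r.coeff (resPos q)) =
      C (blockResMatrix m h).det * r := by
  ext e
  rw [coeff_C_mul]
  by_cases he : e < ∑ k, m k
  · obtain ⟨q, rfl⟩ := exists_resPos_eq he
    rw [coeff_resCombination_resPos, mulVec_mulVec, mul_adjugate, det_transpose, smul_mulVec,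
      one_mulVec, Pi.smul_apply, smul_eq_mul]
  · have hle : ((∑ k, m k : ℕ) : WithBot ℕ) ≤ e := by exact_mod_cast not_lt.1 he
    rw [coeff_eq_zero_of_degree_lt ((degree_resCombination_lt hh _).trans_le hle),
      coeff_eq_zero_of_degree_lt (hr.trans_le hle), mul_zero]

theorem dvd_det_mul_of_C_dvd_resCombination (h : Fin n → R[X]) {x : R}
    {c : (k : Fin n) × Fin (m k) → R} (hx : C x ∣ resCombination m h c)
    (p : (k : Fin n) × Fin (m k)) : x ∣ (blockResMatrix m h).det * c p := by
  have hc : (blockResMatrix m h).det * c p =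
      ((blockResMatrix m h)ᵀ.adjugate *ᵥ ((blockResMatrix m h)ᵀ *ᵥ c)) p := by
    rw [mulVec_mulVec, adjugate_mul, det_transpose, smul_mulVec, one_mulVec, Pi.smul_apply,
      smul_eq_mul]
  rw [hc]
  refine dvd_sum fun q _ => dvd_mul_of_dvd_right ?_ _
  rw [← coeff_resCombination_resPos]
  exact (C_dvd_iff_dvd_coeff _ _).1 hx _

end Blocks

section Perturbation

variable {R : Type*} [CommRing R] {n : ℕ} (g : Fin n → R[X])

noncomputable def perturb (c : (k : Fin n) × Fin ((g k).natDegree) → R) (k : Fin n) : R[X] :=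
  g k + blockPoly k c

theorem perturb_sub (c : (k : Fin n) × Fin ((g k).natDegree) → R) (k : Fin n) :
    perturb g c k - g k = blockPoly k c :=
  add_sub_cancel_left _ _

theorem perturb_sub_perturb (c d : (k : Fin n) × Fin ((g k).natDegree) → R) (k : Fin n) :
    perturb g c k - perturb g d k = blockPoly k (c - d) := by
  rw [perturb, perturb, add_sub_add_left_eq_sub, map_sub]

theorem perturb_add (c d : (k : Fin n) × Fin ((g k).natDegree) → R) (k : Fin n) :
    perturb g (c + d) k = perturb g c k + blockPoly k d := by
  rw [perturb, perturb, map_add, add_assoc]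

variable {g}

theorem degree_blockPoly_lt_degree [Nontrivial R]
    (c : (k : Fin n) × Fin ((g k).natDegree) → R) {k : Fin n} (hk : (g k).Monic) :
    (blockPoly k c).degree < (g k).degree :=
  (degree_eq_natDegree hk.ne_zero).symm ▸ degree_blockPoly_lt k c

theorem monic_perturb (c : (k : Fin n) × Fin ((g k).natDegree) → R) {k : Fin n}
    (hk : (g k).Monic) : (perturb g c k).Monic := by
  nontriviality R
  exact hk.add_of_left (degree_blockPoly_lt_degree c hk)

theorem natDegree_perturb (c : (k : Fin n) × Fin ((g k).natDegree) → R) {k : Fin n}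
    (hk : (g k).Monic) : (perturb g c k).natDegree = (g k).natDegree := by
  nontriviality R
  exact natDegree_add_eq_left_of_degree_lt (degree_blockPoly_lt_degree c hk)

theorem C_dvd_prod_perturb_sub_prod_perturb {x : R}
    {c d : (k : Fin n) × Fin ((g k).natDegree) → R} (h : ∀ p, x ∣ c p - d p) :
    C x ∣ ∏ k, perturb g c k - ∏ k, perturb g d k :=
  dvd_prod_sub_prod _ fun k _ => perturb_sub_perturb g c d k ▸ C_dvd_blockPoly h k

theorem exists_perturb_eq (hmonic : ∀ k, (g k).Monic) {x : R} (hx : ¬IsUnit x)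
    {w : Fin n → R[X]} (hw : ∀ k, (w k).Monic ∧ C x ∣ w k - g k) :
    ∃ c : (k : Fin n) × Fin ((g k).natDegree) → R, (∀ p, x ∣ c p) ∧ perturb g c = w := by
  refine ⟨fun p => (w p.1 - g p.1).coeff p.2, fun p => (C_dvd_iff_dvd_coeff _ _).1 (hw p.1).2 _,
    funext fun k => ?_⟩
  have hdeg := (hw k).1.degree_sub_lt_of_C_dvd_sub (hmonic k) hx (hw k).2
  rw [perturb, blockPoly_coeff (w := fun k => w k - g k) hdeg, add_sub_cancel]

end Perturbation

section Hensel

variable {R : Type*} [CommRing R] [IsDomain R] {n : ℕ} {π : R}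

theorem exists_resCombination_eq {m : Fin n → ℕ} {h : Fin n → R[X]}
    (hh : ∀ k, (h k).natDegree ≤ m k) (hπ : π ≠ 0) {t S : ℕ} (htS : t ≤ S) {u : Rˣ}
    (hdet : (blockResMatrix m h).det = π ^ t * u) {r : R[X]} (hr : r.degree < (∑ k, m k : ℕ))
    (hrS : C (π ^ S) ∣ r) :
    ∃ d, (∀ p, π ^ (S - t) ∣ d p) ∧ resCombination m h d = r := by
  obtain ⟨w, rfl⟩ := hrS
  rw [degree_C_mul (pow_ne_zero S hπ)] at hr
  refine ⟨(π ^ (S - t) * ↑u⁻¹) • ((blockResMatrix m h)ᵀ.adjugate *ᵥ fun q => w.coeff (resPos q)),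
    fun p => ⟨_, by rw [Pi.smul_apply, smul_eq_mul, mul_assoc]⟩, ?_⟩
  rw [map_smul, resCombination_adjugate_mulVec hh hr, hdet, smul_eq_C_mul, ← mul_assoc, ← C_mul,
    mul_mul_mul_comm, ← pow_add, Nat.sub_add_cancel htS, Units.inv_mul, mul_one]

theorem pow_dvd_of_C_pow_dvd_resCombination {m : Fin n → ℕ} (h : Fin n → R[X]) (hπ : π ≠ 0)
    {t N : ℕ} {u : Rˣ} (hdet : (blockResMatrix m h).det = π ^ t * u)
    {c : (k : Fin n) × Fin (m k) → R} (hc : C (π ^ (t + N)) ∣ resCombination m h c)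
    (p : (k : Fin n) × Fin (m k)) : π ^ N ∣ c p := by
  have := dvd_det_mul_of_C_dvd_resCombination h hc p
  rwa [hdet, pow_add, mul_assoc, mul_dvd_mul_iff_left (pow_ne_zero t hπ),
    Units.dvd_mul_left] at this

variable [IsDiscreteValuationRing R] {g : Fin n → R[X]} {t s : ℕ}

theorem exists_det_perturb_eq_pow_mul_unit (hπ : Irreducible π) (hs : 2 * t + 1 ≤ s)
    (ht : π ^ t ∣ genRes g ∧ ¬π ^ (t + 1) ∣ genRes g)
    {c : (k : Fin n) × Fin ((g k).natDegree) → R} (hc : ∀ p, π ^ (s - t) ∣ c p) :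
    ∃ u : Rˣ, (blockResMatrix (fun k => (g k).natDegree) (perturb g c)).det = π ^ t * u := by
  have hdiff : π ^ (t + 1) ∣
      (blockResMatrix (fun k => (g k).natDegree) (perturb g c)).det - genRes g := by
    refine (pow_dvd_pow π (by omega : t + 1 ≤ s - t)).trans (dvd_det_sub_det fun p q => ?_)
    simp only [blockResMatrix, resMatrix]
    split_ifs
    · rw [← coeff_sub]
      exact (C_dvd_iff_dvd_coeff _ _).1
        (dvd_prod_sub_prod _ fun j _ => perturb_sub g c j ▸ C_dvd_blockPoly hc j) _
    · simp
  refine exists_eq_pow_mul_unit hπ ?_ fun h => ht.2 ((dvd_sub_right h).1 hdiff)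
  rw [← sub_add_cancel (blockResMatrix _ _).det (genRes g)]
  exact dvd_add ((pow_dvd_pow π t.le_succ).trans hdiff) ht.1

theorem exists_newton_step (hmonic : ∀ k, (g k).Monic) (hπ : Irreducible π)
    (hs : 2 * t + 1 ≤ s) (ht : π ^ t ∣ genRes g ∧ ¬π ^ (t + 1) ∣ genRes g) {f : R[X]}
    (hf : f.Monic) {S : ℕ} (hS : s ≤ S) {c : (k : Fin n) × Fin ((g k).natDegree) → R}
    (hc : ∀ p, π ^ (s - t) ∣ c p) (hfc : C (π ^ S) ∣ f - ∏ k, perturb g c k) :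
    ∃ d, (∀ p, π ^ (S - t) ∣ d p) ∧ C (π ^ (S + 1)) ∣ f - ∏ k, perturb g (c + d) k := by
  have hmonic' := fun k => monic_perturb c (hmonic k)
  have hdeg' := fun k => natDegree_perturb c (hmonic k)
  have hr : (f - ∏ k, perturb g c k).degree < (∑ k, (g k).natDegree : ℕ) := by
    have := hf.degree_sub_lt_of_C_dvd_sub (monic_prod_of_monic _ _ fun k _ => hmonic' k)
      (not_isUnit_pow_of_irreducible hπ (by omega)) hfc
    rwa [natDegree_prod_of_monic _ _ fun k _ => hmonic' k, sum_congr rfl fun k _ => hdeg' k]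
      at this
  obtain ⟨u, hu⟩ := exists_det_perturb_eq_pow_mul_unit hπ hs ht hc
  obtain ⟨d, hd, hΦ⟩ := exists_resCombination_eq (fun k => (hdeg' k).le) hπ.ne_zero
    (by omega : t ≤ S) hu hr hfc
  refine ⟨d, hd, ?_⟩
  have hsq := sq_dvd_prod_add_sub univ (perturb g c) (fun k => blockPoly k d)
    fun k _ => C_dvd_blockPoly hd k
  rw [← resCombination_apply, hΦ, sub_sub_sub_cancel_right, ← C_pow, ← pow_mul] at hsq
  simp only [← perturb_add] at hsq
  exact dvd_sub_comm.1 ((map_dvd C (pow_dvd_pow π (by omega))).trans hsq)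

theorem eq_of_prod_perturb_eq (hπ : Irreducible π)
    [IsHausdorff (Ideal.span {π}) R] (hs : 2 * t + 1 ≤ s)
    (ht : π ^ t ∣ genRes g ∧ ¬π ^ (t + 1) ∣ genRes g)
    {c c' : (k : Fin n) × Fin ((g k).natDegree) → R} (hc : ∀ p, π ^ (s - t) ∣ c p)
    (hc' : ∀ p, π ^ (s - t) ∣ c' p) (hprod : ∏ k, perturb g c k = ∏ k, perturb g c' k) :
    c = c' := by
  obtain ⟨u, hu⟩ := exists_det_perturb_eq_pow_mul_unit hπ hs ht hc'
  have step : ∀ a, s - t ≤ a → (∀ p, π ^ a ∣ (c - c') p) → ∀ p, π ^ (a + 1) ∣ (c - c') p := by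
    intro a ha hdvd p
    have hsq := sq_dvd_prod_add_sub univ (perturb g c') (fun k => blockPoly k (c - c'))
      fun k _ => C_dvd_blockPoly hdvd k
    simp only [← perturb_add, add_sub_cancel, hprod, sub_self, zero_sub, dvd_neg] at hsq
    rw [← resCombination_apply, ← C_pow, ← pow_mul, show a * 2 = t + (2 * a - t) by omega] at hsq
    exact (pow_dvd_pow π (by omega)).trans
      (pow_dvd_of_C_pow_dvd_resCombination _ hπ.ne_zero hu hsq p)
  have hdvd : ∀ j p, π ^ (s - t + j) ∣ (c - c') p := by
    intro j
    induction j with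
    | zero => exact fun p => dvd_sub (hc p) (hc' p)
    | succ j ih => exact step (s - t + j) (Nat.le_add_right _ _) ih
  funext p
  exact sub_eq_zero.1 (eq_zero_of_forall_pow_dvd fun M =>
    (pow_dvd_pow π (by omega)).trans (hdvd M p))

theorem exists_prod_perturb_eq (hmonic : ∀ k, (g k).Monic) (hπ : Irreducible π)
    [IsAdicComplete (Ideal.span {π}) R] (hs : 2 * t + 1 ≤ s)
    (ht : π ^ t ∣ genRes g ∧ ¬π ^ (t + 1) ∣ genRes g) {f : R[X]} (hf : f.Monic)
    (hcongr : C (π ^ s) ∣ f - ∏ k, g k) :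
    ∃ c : (k : Fin n) × Fin ((g k).natDegree) → R,
      (∀ p, π ^ (s - t) ∣ c p) ∧ f = ∏ k, perturb g c k := by
  choose! corr hcorr hcorrf using fun (i : ℕ) (c : (k : Fin n) × Fin ((g k).natDegree) → R)
    (hc : ∀ p, π ^ (s - t) ∣ c p) (hfc : C (π ^ (s + i)) ∣ f - ∏ k, perturb g c k) =>
    exists_newton_step hmonic hπ hs ht hf (by omega : s ≤ s + i) hc hfc
  let x : ℕ → (k : Fin n) × Fin ((g k).natDegree) → R :=
    fun i => Nat.rec 0 (fun i c => c + corr i c) i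
  have hx : ∀ i, (∀ p, π ^ (s - t) ∣ x i p) ∧ C (π ^ (s + i)) ∣ f - ∏ k, perturb g (x i) k := by
    intro i
    induction i with
    | zero => exact ⟨fun p => dvd_zero _, by simpa [x, perturb] using hcongr⟩
    | succ i ih =>
      exact ⟨fun p => dvd_add (ih.1 p) ((pow_dvd_pow π (by omega)).trans (hcorr i _ ih.1 ih.2 p)),
        hcorrf i _ ih.1 ih.2⟩
  obtain ⟨L, hL⟩ := exists_pow_dvd_sub_limit_pi (x := x) (s - t) fun i p => by
    simpa [x, show s + i - t = s - t + i by omega] using hcorr i _ (hx i).1 (hx i).2 p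
  refine ⟨L, fun p => by simpa [x] using hL 0 p, sub_eq_zero.1 ?_⟩
  refine eq_zero_of_forall_C_pow_dvd (π := π) fun M => ?_
  rw [← sub_add_sub_cancel _ (∏ k, perturb g (x M) k)]
  exact dvd_add ((map_dvd C (pow_dvd_pow π (by omega))).trans (hx M).2)
    ((map_dvd C (pow_dvd_pow π (by omega))).trans
      (C_dvd_prod_perturb_sub_prod_perturb fun p => dvd_sub_comm.1 (hL M p)))

end Hensel

theorem hensel_rychlik_general_general
    {R : Type*} [CommRing R] [IsDomain R] [IsDiscreteValuationRing R]
    (π : R) (hπ : Irreducible π)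
    (hcomplete : IsAdicComplete (Ideal.span {π}) R)
    (f : Polynomial R) (hf : f.Monic)
    {n : ℕ} (g : Fin n → Polynomial R)
    (hmonic : ∀ k, (g k).Monic)
    (t : ℕ) (ht : π ^ t ∣ genRes g ∧ ¬ π ^ (t + 1) ∣ genRes g)
    (s : ℕ) (hs : 2 * t + 1 ≤ s)
    (hcongr : C (π ^ s) ∣ (f - ∏ k, g k)) :
    ∃! g' : Fin n → Polynomial R,
      (∀ k, (g' k).Monic ∧ C (π ^ (s - t)) ∣ (g' k - g k)) ∧ f = ∏ k, g' k := by
  have := hcomplete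
  obtain ⟨c, hc, hfc⟩ := exists_prod_perturb_eq hmonic hπ hs ht hf hcongr
  refine ⟨perturb g c, ⟨fun k => ⟨monic_perturb c (hmonic k), ?_⟩, hfc⟩, ?_⟩
  · exact perturb_sub g c k ▸ C_dvd_blockPoly hc k
  rintro w ⟨hw, rfl⟩
  obtain ⟨c', hc', rfl⟩ :=
    exists_perturb_eq hmonic (not_isUnit_pow_of_irreducible hπ (by omega)) hw
  rw [eq_of_prod_perturb_eq hπ hs ht hc' hc hfc]

/-- **Generalized Hensel–Rychlík Lemma:** over a complete discrete valuation ring, a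
factorisation `f ≡ ∏_k g_(k) mod π^s` into `n` monic factors with
`s ≥ 2t + 1`, `t = val_π(Res(g_(1), …, g_(n)))`, lifts to a unique true factorisation
`f = ∏_k ĝ_(k)` with monic `ĝ_(k) ≡ g_(k) mod π^{s−t}`. -/
theorem hensel_rychlik_general
    {R : Type*} [CommRing R] [IsDomain R] [IsDiscreteValuationRing R]
    (π : R) (hπ : Irreducible π)
    (hcomplete : IsAdicComplete (Ideal.span {π}) R)
    (f : Polynomial R) (hf : f.Monic)
    {n : ℕ} (hn : 1 ≤ n) (g : Fin n → Polynomial R)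
    (hmonic : ∀ k, (g k).Monic) (hdeg : ∀ k, 1 ≤ (g k).natDegree)
    (hres : genRes g ≠ 0)
    (t : ℕ) (ht : π ^ t ∣ genRes g ∧ ¬ π ^ (t + 1) ∣ genRes g)
    (s : ℕ) (hs : 2 * t + 1 ≤ s)
    (hcongr : C (π ^ s) ∣ (f - ∏ k, g k)) :
    ∃! g' : Fin n → Polynomial R,
      (∀ k, (g' k).Monic ∧ C (π ^ (s - t)) ∣ (g' k - g k)) ∧ f = ∏ k, g' k :=
  hensel_rychlik_general_general π hπ hcomplete f hf g hmonic t ht s hs hcongr
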